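/- For every n ≥ 0 and every nonzero element x of a field K (e.g. K = ℝ), the polynomial Z_n satisfies Z_n(−(x − 1/x)^2) = −(x^n − 1/x^n)^2. -/

import Mathlib

open Polynomial

/-- Lucas-type polynomials: `l 0 = 2`, `l 1 = X`, `l n = X * l (n-1) - l (n-2)`. -/
noncomputable def lucPoly : ℕ → ℤ[X]
  | 0 => 2
  | 1 => X
  | (n + 2) => X * lucPoly (n + 1) - lucPoly n

/-- Herbig's variant of the spread polynomials: `Z n = 2 - lₙ(2 - X)`. -/
noncomputable def Zpoly (n : ℕ) : ℤ[X] := 2 - (lucPoly n).comp (2 - X)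

/-! Whenever `a * b = 1`, the Lucas polynomial sends `a + b` to `aⁿ + bⁿ`. Since
`2 + (a - b)² = a² + b²`, this gives `Zₙ(-(a - b)²) = 2 - lₙ(a² + b²) = 2 - a²ⁿ - b²ⁿ = -(aⁿ - bⁿ)²`;
take `a = x`, `b = 1/x`. -/

section

variable {R : Type*} [CommRing R]

theorem lucPoly_aeval_add_of_mul_eq_one (n : ℕ) {a b : R} (hab : a * b = 1) :
    (lucPoly n).aeval (a + b) = a ^ n + b ^ n := by
  induction n using Nat.twoStepInduction with
  | zero =>
    show aeval (a + b) (2 : ℤ[X]) = _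
    rw [map_ofNat]
    ring
  | one => simp [lucPoly]
  | more n ih ih' =>
    rw [lucPoly, map_sub, map_mul, aeval_X, ih, ih']
    linear_combination (a ^ n + b ^ n) * hab

theorem Zpoly_aeval_neg_sub_sq_of_mul_eq_one (n : ℕ) {a b : R} (hab : a * b = 1) :
    (Zpoly n).aeval (-(a - b) ^ 2) = -(a ^ n - b ^ n) ^ 2 := by
  have hsq : a ^ 2 * b ^ 2 = 1 := by rw [← mul_pow, hab, one_pow]
  have hpow : a ^ n * b ^ n = 1 := by rw [← mul_pow, hab, one_pow]
  have harg : 2 - -(a - b) ^ 2 = a ^ 2 + b ^ 2 := by linear_combination -2 * hab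
  rw [Zpoly, map_sub, aeval_comp, map_ofNat, map_sub, map_ofNat, aeval_X, harg,
    lucPoly_aeval_add_of_mul_eq_one n hsq]
  linear_combination -2 * hpow

end

theorem Zpoly_eval_neg_sq {K : Type*} [Field K] (n : ℕ) (x : K) (hx : x ≠ 0) :
    (Zpoly n).aeval (-(x - 1 / x) ^ 2) = -(x ^ n - 1 / x ^ n) ^ 2 := by
  rw [← one_div_pow]
  exact Zpoly_aeval_neg_sub_sq_of_mul_eq_one n (mul_one_div_cancel hx)
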